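/- arXiv:0901.2261 — 2 statements merged into one kernel-verified Lean document; each statement's English description precedes it below -/
import Mathlib

section
/- Let Θ be a nonzero quadratic spinor, let c ∈ ℂ be nonzero, and set ψ := c·(Θ⊙Θ). If a quadratic spinor ω satisfies the algebraic Kähler condition with respect to ψ, then there exists λ ∈ ℂ with ω_{AB} = λ·Θ_{AB} for all A,B ∈ {0,1}; that is, every solution of the algebraic Kähler condition for a type-D quartic spinor is proportional to Θ. -/
noncomputable section

open Finset

/-- The symplectic array ε with ε₀₁ = 1, ε₁₀ = −1, ε₀₀ = ε₁₁ = 0.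
The same array is used with upper indices. -/
def eps : Fin 2 → Fin 2 → ℂ := ![![0, 1], ![-1, 0]]

/-- A quartic spinor: invariance under all permutations of its four arguments
(equivalently, under the adjacent transpositions, which generate S₄). -/
def IsQuartic (ψ : Fin 2 → Fin 2 → Fin 2 → Fin 2 → ℂ) : Prop :=
  ∀ A B C D : Fin 2,
    ψ A B C D = ψ B A C D ∧ ψ A B C D = ψ A C B D ∧ ψ A B C D = ψ A B D C

/-- A quadratic spinor: a symmetric map. -/
def IsQuadratic (ω : Fin 2 → Fin 2 → ℂ) : Prop := ∀ A B : Fin 2, ω A B = ω B A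

/-- ⟨ψ,ψ⟩ for a quartic spinor. -/
def quarticInner (ψ : Fin 2 → Fin 2 → Fin 2 → Fin 2 → ℂ) : ℂ :=
  ∑ A, ∑ B, ∑ C, ∑ D, ∑ A1, ∑ B1, ∑ C1, ∑ D1,
    eps A A1 * eps B B1 * eps C C1 * eps D D1 * ψ A B C D * ψ A1 B1 C1 D1

/-- ⟨ω,ω⟩ for a quadratic spinor. -/
def quadInner (ω : Fin 2 → Fin 2 → ℂ) : ℂ :=
  ∑ A, ∑ B, ∑ A1, ∑ B1, eps A A1 * eps B B1 * ω A B * ω A1 B1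

/-- The symmetrized square (ω⊙ω) of a quadratic spinor. -/
def symSq (ω : Fin 2 → Fin 2 → ℂ) : Fin 2 → Fin 2 → Fin 2 → Fin 2 → ℂ :=
  fun A B C D => (1/3 : ℂ) * (ω A B * ω C D + ω A C * ω B D + ω A D * ω B C)

/-- The algebraic Kähler condition:
∑_σ ∑_{E,F} ε^{EF} ψ_{F σ(A) σ(B) σ(C)} ω_{σ(D) E} = 0 for all A,B,C,D. -/
def AlgKahler (ψ : Fin 2 → Fin 2 → Fin 2 → Fin 2 → ℂ) (ω : Fin 2 → Fin 2 → ℂ) : Prop :=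
  ∀ A B C D : Fin 2,
    ∑ σ : Equiv.Perm (Fin 4), ∑ E, ∑ F,
      eps E F * ψ F (![A, B, C, D] (σ 0)) (![A, B, C, D] (σ 1)) (![A, B, C, D] (σ 2)) *
        ω (![A, B, C, D] (σ 3)) E = 0

/-!
Read a symmetric spinor `Θ` as the binary quadratic form `P = Θ_{AB} ξ^A ξ^B` in `ξ = (X, 1)`,
and `ω` likewise as `R`. The constant `c` factors out of the condition, and for `ψ = Θ ⊙ Θ` the
algebraic Kähler condition at the index patterns `0000, 0001, 0011, 0111, 1111` is, coefficient by coefficient, the equation `P · W(P, R) = 0`,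
where `W` is the Wronskian. Since `ℂ[X]` is a domain and `P ≠ 0`, `W(P, R) = 0`. The coefficients
of `W(P, R)` are, up to sign, twice the cross product of the coefficient vectors of `Θ` and `ω`,
so these vectors are linearly dependent and `ω` is a multiple of `Θ`.
-/

open Polynomial

namespace Polynomial

variable {R : Type*}

theorem quadratic_eq_zero_iff [Semiring R] {a b c : R} :
    C a * X ^ 2 + C b * X + C c = 0 ↔ a = 0 ∧ b = 0 ∧ c = 0 := by
  refine ⟨fun h => ⟨?_, ?_, ?_⟩, fun ⟨ha, hb, hc⟩ => by simp [ha, hb, hc]⟩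
  · simpa using congrArg (coeff · 2) h
  · simpa using congrArg (coeff · 1) h
  · simpa using congrArg (coeff · 0) h

theorem quadratic_mul_quadratic_eq_zero [CommRing R] {a b c u v w : R}
    (h4 : a * u = 0) (h3 : a * v + b * u = 0) (h2 : a * w + b * v + c * u = 0)
    (h1 : b * w + c * v = 0) (h0 : c * w = 0) :
    (C a * X ^ 2 + C b * X + C c) * (C u * X ^ 2 + C v * X + C w) = 0 := by
  have hexpand : (C a * X ^ 2 + C b * X + C c) * (C u * X ^ 2 + C v * X + C w) =
      C (a * u) * X ^ 4 + C (a * v + b * u) * X ^ 3 + C (a * w + b * v + c * u) * X ^ 2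
        + C (b * w + c * v) * X + C (c * w) := by
    simp only [map_add, map_mul]
    ring
  rw [hexpand, h4, h3, h2, h1, h0]
  simp

end Polynomial

theorem exists_smul_eq_of_crossProduct_eq_zero {F : Type*} [Field F] {v w : Fin 3 → F}
    (hv : v ≠ 0) (h : crossProduct v w = 0) : ∃ a : F, a • v = w := by
  by_contra! hw
  exact crossProduct_ne_zero_iff_linearIndependent.mpr ((LinearIndependent.pair_iff' hv).mpr hw) h

theorem sum_perm_fin_four {M : Type*} [AddCommMonoid M] (g : Fin 4 → Fin 4 → Fin 4 → Fin 4 → M) :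
    ∑ σ : Equiv.Perm (Fin 4), g (σ 0) (σ 1) (σ 2) (σ 3) =
      g 0 1 2 3 + g 0 1 3 2 + g 0 2 1 3 + g 0 2 3 1 + g 0 3 2 1 + g 0 3 1 2 +
      g 1 0 2 3 + g 1 0 3 2 + g 1 2 0 3 + g 1 2 3 0 + g 1 3 2 0 + g 1 3 0 2 +
      g 2 1 0 3 + g 2 1 3 0 + g 2 0 1 3 + g 2 0 3 1 + g 2 3 0 1 + g 2 3 1 0 +
      g 3 1 2 0 + g 3 1 0 2 + g 3 2 1 0 + g 3 2 0 1 + g 3 0 2 1 + g 3 0 1 2 := by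
  simp only [← Equiv.sum_comp (Equiv.Perm.decomposeFin.symm : Fin 4 × Equiv.Perm (Fin 3) ≃ _),
    ← Equiv.sum_comp (Equiv.Perm.decomposeFin.symm : Fin 3 × Equiv.Perm (Fin 2) ≃ _),
    ← Equiv.sum_comp (Equiv.Perm.decomposeFin.symm : Fin 2 × Equiv.Perm (Fin 1) ≃ _),
    Fintype.sum_prod_type, Fin.sum_univ_succ, Finset.univ_unique, Finset.sum_singleton]
  simp only [show (1 : Fin 4) = Fin.succ 0 from rfl,
    show (2 : Fin 4) = Fin.succ (Fin.succ 0) from rfl,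
    show (3 : Fin 4) = Fin.succ (Fin.succ (Fin.succ 0)) from rfl,
    Equiv.Perm.decomposeFin_symm_apply_zero, Equiv.Perm.decomposeFin_symm_apply_succ,
    show (default : Equiv.Perm (Fin 1)) = 1 from rfl, Equiv.Perm.one_apply]
  norm_num [Equiv.swap_apply_def, Fin.ext_iff]
  abel

def contraction (ψ : Fin 2 → Fin 2 → Fin 2 → Fin 2 → ℂ) (ω : Fin 2 → Fin 2 → ℂ)
    (A B C D : Fin 2) : ℂ :=
  ∑ E, ∑ F, eps E F * ψ F A B C * ω D E

section

variable {ψ : Fin 2 → Fin 2 → Fin 2 → Fin 2 → ℂ} {ω : Fin 2 → Fin 2 → ℂ}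

theorem AlgKahler.expand (h : AlgKahler ψ ω) (A B C D : Fin 2) :
    contraction ψ ω A B C D + contraction ψ ω A B D C + contraction ψ ω A C B D +
      contraction ψ ω A C D B + contraction ψ ω A D C B + contraction ψ ω A D B C +
      contraction ψ ω B A C D + contraction ψ ω B A D C + contraction ψ ω B C A D +
      contraction ψ ω B C D A + contraction ψ ω B D C A + contraction ψ ω B D A C +
      contraction ψ ω C B A D + contraction ψ ω C B D A + contraction ψ ω C A B D +
      contraction ψ ω C A D B + contraction ψ ω C D A B + contraction ψ ω C D B A +
      contraction ψ ω D B C A + contraction ψ ω D B A C + contraction ψ ω D C B A +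
      contraction ψ ω D C A B + contraction ψ ω D A C B + contraction ψ ω D A B C = 0 :=
  (sum_perm_fin_four fun i j k l => contraction ψ ω
    (![A, B, C, D] i) (![A, B, C, D] j) (![A, B, C, D] k) (![A, B, C, D] l)).symm.trans (h A B C D)

theorem AlgKahler.of_const_mul {c : ℂ} (hc : c ≠ 0)
    (h : AlgKahler (fun A B C D => c * ψ A B C D) ω) : AlgKahler ψ ω := by
  intro A B C D
  have hABCD := h A B C D
  simp only [mul_assoc, mul_left_comm _ c, ← Finset.mul_sum] at hABCD
  simpa only [mul_assoc] using (mul_eq_zero.mp hABCD).resolve_left hc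

end

section

variable {Θ ω : Fin 2 → Fin 2 → ℂ}

theorem IsQuadratic.ext (hΘ : IsQuadratic Θ) (hω : IsQuadratic ω) (h00 : Θ 0 0 = ω 0 0)
    (h01 : Θ 0 1 = ω 0 1) (h11 : Θ 1 1 = ω 1 1) : Θ = ω := by
  funext A B
  fin_cases A <;> fin_cases B
  exacts [h00, h01, by simpa [hΘ 1 0, hω 1 0] using h01, h11]

/-- `Θ_{AB} ξ^A ξ^B` at `ξ = (X, 1)`. -/
def binaryForm (Θ : Fin 2 → Fin 2 → ℂ) : ℂ[X] :=
  C (Θ 0 0) * X ^ 2 + C (2 * Θ 0 1) * X + C (Θ 1 1)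

theorem IsQuadratic.binaryForm_ne_zero (hΘ : IsQuadratic Θ) (hΘ0 : Θ ≠ fun _ _ => 0) :
    binaryForm Θ ≠ 0 := by
  rw [binaryForm, Ne, Polynomial.quadratic_eq_zero_iff]
  rintro ⟨h00, h01, h11⟩
  exact hΘ0 (hΘ.ext (fun _ _ => rfl) h00 (by simpa using h01) h11)

theorem wronskian_binaryForm (Θ ω : Fin 2 → Fin 2 → ℂ) :
    wronskian (binaryForm Θ) (binaryForm ω) =
      C (2 * (Θ 0 1 * ω 0 0 - Θ 0 0 * ω 0 1)) * X ^ 2 +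
        C (2 * (Θ 1 1 * ω 0 0 - Θ 0 0 * ω 1 1)) * X + C (2 * (Θ 1 1 * ω 0 1 - Θ 0 1 * ω 1 1)) := by
  simp only [wronskian, binaryForm, derivative_add, derivative_mul, derivative_C, derivative_X,
    derivative_X_sq, derivative_ofNat, map_mul, map_sub, map_ofNat C 2]
  ring

theorem AlgKahler.binaryForm_mul_wronskian_eq_zero (hΘ : IsQuadratic Θ) (hω : IsQuadratic ω)
    (h : AlgKahler (symSq Θ) ω) :
    binaryForm Θ * wronskian (binaryForm Θ) (binaryForm ω) = 0 := by
  have h0000 := h.expand 0 0 0 0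
  have h0001 := h.expand 0 0 0 1
  have h0011 := h.expand 0 0 1 1
  have h0111 := h.expand 0 1 1 1
  have h1111 := h.expand 1 1 1 1
  simp only [contraction, Fin.sum_univ_two, symSq, eps, Matrix.cons_val_zero, Matrix.cons_val_one,
    hΘ 1 0, hω 1 0] at h0000 h0001 h0011 h0111 h1111
  rw [wronskian_binaryForm, binaryForm]
  apply Polynomial.quadratic_mul_quadratic_eq_zero
  · linear_combination (1/12 : ℂ) * h0000
  · linear_combination (1/3 : ℂ) * h0001
  · linear_combination (1/2 : ℂ) * h0011
  · linear_combination (1/3 : ℂ) * h0111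
  · linear_combination (1/12 : ℂ) * h1111

theorem exists_eq_mul_of_wronskian_binaryForm_eq_zero (hΘ : IsQuadratic Θ) (hω : IsQuadratic ω)
    (hΘ0 : Θ ≠ fun _ _ => 0) (hW : wronskian (binaryForm Θ) (binaryForm ω) = 0) :
    ∃ lam : ℂ, ∀ A B : Fin 2, ω A B = lam * Θ A B := by
  rw [wronskian_binaryForm, Polynomial.quadratic_eq_zero_iff] at hW
  obtain ⟨hu, hv, hw⟩ := hW
  set θ : Fin 3 → ℂ := ![Θ 0 0, Θ 0 1, Θ 1 1]
  have hθ : θ ≠ 0 := fun h0 =>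
    hΘ0 (hΘ.ext (fun _ _ => rfl) (congrFun h0 0) (congrFun h0 1) (congrFun h0 2))
  have hcross : crossProduct θ ![ω 0 0, ω 0 1, ω 1 1] = 0 := by
    ext i
    fin_cases i <;>
      simp only [θ, cross_apply, Fin.zero_eta, Fin.mk_one, Fin.reduceFinMk, Matrix.cons_val_zero,
        Matrix.cons_val_one, Matrix.cons_val, Pi.zero_apply]
    · linear_combination (-1/2 : ℂ) * hw
    · linear_combination (1/2 : ℂ) * hv
    · linear_combination (-1/2 : ℂ) * hu
  obtain ⟨lam, hlam⟩ := exists_smul_eq_of_crossProduct_eq_zero hθ hcross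
  suffices ω = fun A B => lam * Θ A B from ⟨lam, fun A B => congrFun (congrFun this A) B⟩
  refine hω.ext (fun A B => by rw [hΘ A B]) ?_ ?_ ?_ <;> symm
  exacts [by simpa [θ] using congrFun hlam 0, by simpa [θ] using congrFun hlam 1,
    by simpa [θ] using congrFun hlam 2]

end

/-- for a type-D quartic spinor ψ = c·(Θ⊙Θ) with Θ ≠ 0 and c ≠ 0, every
quadratic spinor ω satisfying the algebraic Kähler condition w.r.t. ψ is proportional to Θ. -/
theorem algKahler_solution_proportional
    (Θ : Fin 2 → Fin 2 → ℂ) (hΘ : IsQuadratic Θ) (hΘ0 : Θ ≠ fun _ _ => 0)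
    (c : ℂ) (hc : c ≠ 0)
    (ω : Fin 2 → Fin 2 → ℂ) (hω : IsQuadratic ω)
    (halg : AlgKahler (fun A B C D => c * symSq Θ A B C D) ω) :
    ∃ lam : ℂ, ∀ A B : Fin 2, ω A B = lam * Θ A B := by
  have hW : wronskian (binaryForm Θ) (binaryForm ω) = 0 :=
    (mul_eq_zero.mp ((halg.of_const_mul hc).binaryForm_mul_wronskian_eq_zero hΘ hω)).resolve_left
      (hΘ.binaryForm_ne_zero hΘ0)
  exact exists_eq_mul_of_wronskian_binaryForm_eq_zero hΘ hω hΘ0 hW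
end
end

section
/- For every quartic spinor ψ and all A, E ∈ {0,1}: Σ_{B,C,D ∈ {0,1}} ψ^{BCDE} ψ_{BCDA} = (1/2)·⟨ψ,ψ⟩·δ^E_A, where ψ^{BCDE} := Σ_{B',C',D',E' ∈ {0,1}} ε^{BB'} ε^{CC'} ε^{DD'} ε^{EE'} ψ_{B'C'D'E'} and δ^E_A is the Kronecker delta. -/
/-!
Write `T E A` (`quarticContraction`) for the left-hand side; lowering `E` again gives
`S X Y = Σ ε^{BB'} ε^{CC'} ε^{DD'} ψ_{B'C'D'X} ψ_{BCDY}` (`tripleContraction`),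
so that `T E A = Σ_{E'} ε^{EE'} S E' A`. Exchanging the two factors of `ψ` flips each of the
three `ε`s, so `S` is antisymmetric, hence a multiple of `ε` because the spinor space is
two-dimensional. As `ε ε = -1`, `T` is a multiple of `δ`, and its trace is `⟨ψ,ψ⟩`, which gives
the factor `1/2`.
-/

noncomputable section

open Finset

/-- ψ with all four indices raised by ε. -/
def quarticRaised (ψ : Fin 2 → Fin 2 → Fin 2 → Fin 2 → ℂ) :
    Fin 2 → Fin 2 → Fin 2 → Fin 2 → ℂ :=
  fun B C D E => ∑ B1, ∑ C1, ∑ D1, ∑ E1,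
    eps B B1 * eps C C1 * eps D D1 * eps E E1 * ψ B1 C1 D1 E1

@[simp] theorem eps_zero_zero : eps 0 0 = 0 := rfl
@[simp] theorem eps_zero_one : eps 0 1 = 1 := rfl
@[simp] theorem eps_one_zero : eps 1 0 = -1 := rfl
@[simp] theorem eps_one_one : eps 1 1 = 0 := rfl

theorem sum_eps_mul_eps (a c : Fin 2) :
    ∑ b, eps a b * eps b c = -(if a = c then 1 else 0) := by
  fin_cases a <;> fin_cases c <;> simp [Fin.sum_univ_two]

theorem eq_mul_eps_of_antisymm {S : Fin 2 → Fin 2 → ℂ} (hS : ∀ x y, S x y = -S y x)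
    (x y : Fin 2) : S x y = S 0 1 * eps x y := by
  have h00 : S 0 0 = 0 := by linear_combination hS 0 0 / 2
  have h11 : S 1 1 = 0 := by linear_combination hS 1 1 / 2
  fin_cases x <;> fin_cases y <;> simp [h00, h11, hS 1 0]

section Contraction

variable (ψ : Fin 2 → Fin 2 → Fin 2 → Fin 2 → ℂ)

def quarticContraction (E A : Fin 2) : ℂ :=
  ∑ B, ∑ C, ∑ D, quarticRaised ψ B C D E * ψ B C D A

def tripleContraction (X Y : Fin 2) : ℂ :=
  ∑ B, ∑ C, ∑ D, ∑ B1, ∑ C1, ∑ D1,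
    eps B B1 * eps C C1 * eps D D1 * ψ B1 C1 D1 X * ψ B C D Y

theorem tripleContraction_antisymm (X Y : Fin 2) :
    tripleContraction ψ X Y = -tripleContraction ψ Y X := by
  simp only [tripleContraction, Fin.sum_univ_two, eps_zero_zero, eps_zero_one,
    eps_one_zero, eps_one_one]
  ring

theorem quarticContraction_eq_sum_eps_mul (E A : Fin 2) :
    quarticContraction ψ E A = ∑ E1, eps E E1 * tripleContraction ψ E1 A := by
  simp only [quarticContraction, quarticRaised, tripleContraction, Fin.sum_univ_two,
    eps_zero_zero, eps_zero_one, eps_one_zero, eps_one_one]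
  ring

theorem quarticInner_eq_sum_quarticContraction :
    quarticInner ψ = ∑ E, quarticContraction ψ E E := by
  simp only [quarticInner, quarticContraction, quarticRaised, Fin.sum_univ_two,
    eps_zero_zero, eps_zero_one, eps_one_zero, eps_one_one]
  ring

theorem quarticContraction_eq_mul_delta (E A : Fin 2) :
    quarticContraction ψ E A = -tripleContraction ψ 0 1 * (if E = A then 1 else 0) := by
  calc quarticContraction ψ E A
      = ∑ E1, eps E E1 * tripleContraction ψ E1 A := quarticContraction_eq_sum_eps_mul ψ E A
    _ = tripleContraction ψ 0 1 * ∑ E1, eps E E1 * eps E1 A := by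
        rw [mul_sum]
        refine sum_congr rfl fun E1 _ => ?_
        rw [eq_mul_eps_of_antisymm (tripleContraction_antisymm ψ) E1 A]
        ring
    _ = -tripleContraction ψ 0 1 * (if E = A then 1 else 0) := by
        rw [sum_eps_mul_eps]
        ring

end Contraction

theorem quartic_contraction_identity_general
    (ψ : Fin 2 → Fin 2 → Fin 2 → Fin 2 → ℂ) (A E : Fin 2) :
    ∑ B, ∑ C, ∑ D, quarticRaised ψ B C D E * ψ B C D A
      = (1/2 : ℂ) * quarticInner ψ * (if E = A then 1 else 0) := by
  change quarticContraction ψ E A = _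
  simp_rw [quarticInner_eq_sum_quarticContraction, quarticContraction_eq_mul_delta, if_pos,
    Fin.sum_univ_two]
  ring

/-- Σ_{B,C,D} ψ^{BCDE} ψ_{BCDA} = (1/2)·⟨ψ,ψ⟩·δ^E_A. -/
theorem quartic_contraction_identity
    (ψ : Fin 2 → Fin 2 → Fin 2 → Fin 2 → ℂ) (hψ : IsQuartic ψ) (A E : Fin 2) :
    ∑ B, ∑ C, ∑ D, quarticRaised ψ B C D E * ψ B C D A
      = (1/2 : ℂ) * quarticInner ψ * (if E = A then 1 else 0) :=
  quartic_contraction_identity_general ψ A E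
end
end
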